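/- Let A be an n×n matrix over the max-plus semiring and λ ∈ ℝ. If there exist a vector x ∈ ℝⁿ and natural numbers k₀ and c ≥ 1 such that the orbit x(k) defined by x(0)=x, x(k+1)=A⊗x(k), satisfies x(k+c) = λ·c + x(k) (componentwise) for all k ≥ k₀, then the vector v = max_{1≤i≤c} ( λ·(c−i) + x(k₀+i−1) ) (componentwise max) satisfies A⊗v = λ + v; i.e., v is a max-plus eigenvector of A with eigenvalue λ. -/

import Mathlib

abbrev MP := WithBot ℝ

def mpMul {m n p : ℕ} (A : Matrix (Fin m) (Fin n) MP) (B : Matrix (Fin n) (Fin p) MP) :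
    Matrix (Fin m) (Fin p) MP :=
  fun i j => Finset.univ.sup fun k => A i k + B k j

def mpId (n : ℕ) : Matrix (Fin n) (Fin n) MP :=
  fun i j => if i = j then ((0 : ℝ) : MP) else ⊥

def mpPow {n : ℕ} (A : Matrix (Fin n) (Fin n) MP) : ℕ → Matrix (Fin n) (Fin n) MP
  | 0 => mpId n
  | k + 1 => mpMul A (mpPow A k)

def mpMulVec {n : ℕ} (A : Matrix (Fin n) (Fin n) MP) (v : Fin n → MP) : Fin n → MP :=
  fun i => Finset.univ.sup fun j => A i j + v j

def Regular {n : ℕ} (A : Matrix (Fin n) (Fin n) MP) : Prop := ∀ i, ∃ j, A i j ≠ ⊥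

/-!
The max-plus product `A ⊗ ·` commutes with finite maxima and with adding a constant, so
`A ⊗ v` is the componentwise max of the shifted points `λ (c - t - 1) + x (k₀ + t + 1)`,
`t < c`. These are `λ` plus the terms defining `v`, permuted cyclically: the last one,
`x (k₀ + c) = λ c + x k₀`, takes the place of the first.
-/

open Finset

/-- Unlike `Finset.add_sup'`, no nonemptiness is needed: `a + ⊥ = ⊥`. -/
lemma WithBot.add_finset_sup {α ι : Type*} [Add α] [LinearOrder α] [AddLeftMono α]
    (s : Finset ι) (a : WithBot α) (f : ι → WithBot α) :
    a + s.sup f = s.sup fun t => a + f t :=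
  apply_sup_eq_sup_comp (a + ·) (fun _ _ => (monotone_id.const_add a).map_sup _ _)
    (WithBot.add_bot a)

section MaxPlus

variable {n : ℕ} (A : Matrix (Fin n) (Fin n) MP)

lemma mpMulVec_const_add (a : MP) (w : Fin n → MP) (i : Fin n) :
    mpMulVec A (fun j => a + w j) i = a + mpMulVec A w i := by
  simp only [mpMulVec, WithBot.add_finset_sup, add_left_comm a]

lemma mpMulVec_finset_sup {ι : Type*} (s : Finset ι) (w : ι → Fin n → MP) (i : Fin n) :
    mpMulVec A (fun j => s.sup fun t => w t j) i = s.sup fun t => mpMulVec A (w t) i := by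
  simp only [mpMulVec, WithBot.add_finset_sup]
  exact Finset.sup_comm _ _ _

end MaxPlus

lemma Finset.sup'_range_comp_succ {α : Type*} [SemilatticeSup α] {c : ℕ}
    (hc : (range c).Nonempty) (φ : ℕ → α) (hφ : φ c = φ 0) :
    (range c).sup' hc (fun t => φ (t + 1)) = (range c).sup' hc φ := by
  obtain ⟨m, rfl⟩ := Nat.exists_eq_add_one_of_ne_zero (nonempty_range_iff.mp hc)
  apply le_antisymm
  · refine sup'_le _ _ fun t ht => ?_
    rcases Nat.lt_or_eq_of_le (mem_range.mp ht) with hlt | heq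
    · exact le_sup' φ (mem_range.mpr hlt)
    · obtain rfl : t = m := Nat.succ_injective heq
      rw [hφ]
      exact le_sup' φ (mem_range.mpr (Nat.succ_pos _))
  · refine sup'_le _ _ fun t ht => ?_
    rcases t with _ | t
    · rw [← hφ]
      exact le_sup' (fun t => φ (t + 1)) (mem_range.mpr (Nat.lt_succ_self m))
    · exact le_sup' (fun t => φ (t + 1)) (mem_range.mpr (Nat.lt_of_succ_lt (mem_range.mp ht)))

lemma sup'_weighted_window_succ (lam : ℝ) (y : ℕ → ℝ) {c : ℕ} (hc : (range c).Nonempty)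
    (hy : y c = lam * c + y 0) :
    (range c).sup' hc (fun t => lam * ((c - (t + 1) : ℕ) : ℝ) + y (t + 1))
      = lam + (range c).sup' hc (fun t => lam * ((c - (t + 1) : ℕ) : ℝ) + y t) := by
  rw [add_sup', sup'_range_comp_succ hc (fun t => lam * ((c - t : ℕ) : ℝ) + y t)
    (by simp [hy])]
  refine sup'_congr _ rfl fun t ht => ?_
  have htc : t + 1 ≤ c := mem_range.mp ht
  push_cast [htc, htc.trans' t.le_succ]
  ring

/-- Periodicity of an orbit yields a max-plus eigenvector built as the
componentwise max of shifted orbit points. -/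
theorem stmt5 {n : ℕ} (A : Matrix (Fin n) (Fin n) MP) (lam : ℝ)
    (x : ℕ → Fin n → ℝ)
    (horbit : ∀ k i, ((x (k + 1) i : ℝ) : MP) = mpMulVec A (fun j => ((x k j : ℝ) : MP)) i)
    (k₀ c : ℕ) (hc : 1 ≤ c)
    (hper : ∀ k ≥ k₀, ∀ i, x (k + c) i = lam * c + x k i) :
    ∀ i, mpMulVec A
        (fun j => (((Finset.range c).sup' (Finset.nonempty_range_iff.mpr (by omega))
          (fun t => lam * ((c - (t + 1) : ℕ) : ℝ) + x (k₀ + t) j) : ℝ) : MP)) i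
      = (lam : MP) + (((Finset.range c).sup' (Finset.nonempty_range_iff.mpr (by omega))
          (fun t => lam * ((c - (t + 1) : ℕ) : ℝ) + x (k₀ + t) i) : ℝ) : MP) := by
  intro i
  have hS : (range c).Nonempty := nonempty_range_iff.mpr (by omega)
  rw [← WithBot.coe_add, ← sup'_weighted_window_succ lam (fun t => x (k₀ + t) i) hS
    (hper k₀ le_rfl i)]
  simp only [coe_sup', Function.comp_def, WithBot.coe_add, mpMulVec_finset_sup,
    mpMulVec_const_add, ← horbit]
  rfl
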